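/- arXiv:2209.01547 — 3 statements merged into one kernel-verified Lean document; each statement's English description precedes it below -/
import Mathlib

section
/- Let X = f(ε_X, Z) and Y = g(ε_Y, Z) where (ε_X, ε_Y) is independent of Z and f, g are invertible in their first argument with differentiable inverses. Then X and Y are conditionally independent given Z if and only if ε_X and ε_Y are (marginally) independent. -/
/-!
The map `(e, z) ↦ (f e z, z)` is an injective measurable map between standard Borel spaces,
hence a measurable embedding, so `σ(X, Z) = σ(ε_X, Z)`; likewise `σ(Y, Z) = σ(ε_Y, Z)`.
Conditional independence given `Z` does not change when `σ(Z)` is adjoined to both sides, so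
`X ⟂ Y | Z` iff `ε_X ⟂ ε_Y | Z`. Finally, since `(ε_X, ε_Y)` is independent of `Z`, the
conditional probability given `Z` of an event in `σ(ε_X, ε_Y)` is a.s. its plain probability,
and conditional independence of `ε_X, ε_Y` given `Z` reduces to their independence.
-/

open MeasureTheory ProbabilityTheory Set

lemma IsPiSystem.image2_inter {α : Type*} {S T : Set (Set α)} (hS : IsPiSystem S)
    (hT : IsPiSystem T) : IsPiSystem (image2 (· ∩ ·) S T) := by
  rintro _ ⟨s₁, hs₁, t₁, ht₁, rfl⟩ _ ⟨s₂, hs₂, t₂, ht₂, rfl⟩ hst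
  rw [inter_inter_inter_comm] at hst ⊢
  exact mem_image2_of_mem (hS _ hs₁ _ hs₂ (hst.mono inter_subset_left))
    (hT _ ht₁ _ ht₂ (hst.mono inter_subset_right))

lemma MeasurableSpace.sup_eq_generateFrom_image2_inter {α : Type*} (m₁ m₂ : MeasurableSpace α) :
    m₁ ⊔ m₂ =
      generateFrom (image2 (· ∩ ·) {s | MeasurableSet[m₁] s} {t | MeasurableSet[m₂] t}) := by
  refine le_antisymm (sup_le (fun s hs => ?_) (fun t ht => ?_)) (generateFrom_le ?_)
  · exact measurableSet_generateFrom ⟨s, hs, univ, @MeasurableSet.univ _ m₂, inter_univ s⟩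
  · exact measurableSet_generateFrom ⟨univ, @MeasurableSet.univ _ m₁, t, ht, univ_inter t⟩
  · rintro _ ⟨s, hs, t, ht, rfl⟩
    exact (le_sup_left (a := m₁) (b := m₂) s hs).inter (le_sup_right (a := m₁) (b := m₂) t ht)

namespace MeasureTheory

variable {Ω : Type*} {m' mΩ : MeasurableSpace Ω} {μ : Measure Ω} [IsFiniteMeasure μ]

lemma condExp_indicator_inter_eq_indicator {s u : Set Ω} (hs : MeasurableSet s)
    (hu : MeasurableSet[m'] u) : μ⟦u ∩ s | m'⟧ =ᵐ[μ] u.indicator (μ⟦s | m'⟧) := by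
  rw [← indicator_indicator]
  exact condExp_indicator ((integrable_const 1).indicator hs) hu

lemma condExp_indicator_ae_eq_measureReal_of_indep (hm' : m' ≤ mΩ) {m₁ : MeasurableSpace Ω}
    (hm₁ : m₁ ≤ mΩ) (hind : Indep m₁ m' μ) {s : Set Ω} (hs : MeasurableSet[m₁] s) :
    μ⟦s | m'⟧ =ᵐ[μ] fun _ => μ.real s := by
  refine (condExp_indep_eq hm₁ hm' (stronglyMeasurable_const.indicator hs) hind).trans ?_
  exact Filter.EventuallyEq.of_eq (funext fun _ => integral_indicator_one (hm₁ s hs))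

end MeasureTheory

namespace ProbabilityTheory

variable {Ω : Type*} {m' m₁ m₂ mΩ : MeasurableSpace Ω} [StandardBorelSpace Ω] {hm' : m' ≤ mΩ}
  {μ : Measure Ω} [IsFiniteMeasure μ]

lemma CondIndep.sup_left (h : CondIndep m' m₁ m₂ hm' μ) (hm₁ : m₁ ≤ mΩ) (hm₂ : m₂ ≤ mΩ) :
    CondIndep m' (m₁ ⊔ m') m₂ hm' μ := by
  have hmeas : ∀ s ∈ image2 (· ∩ ·) {s | MeasurableSet[m₁] s} {u | MeasurableSet[m'] u},
      MeasurableSet[mΩ] s := by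
    rintro _ ⟨s, hs, u, hu, rfl⟩
    exact (hm₁ s hs).inter (hm' u hu)
  refine CondIndepSets.condIndep (sup_le hm₁ hm') hm₂
    ((@MeasurableSpace.isPiSystem_measurableSet _ m₁).image2_inter
      (@MeasurableSpace.isPiSystem_measurableSet _ m'))
    (@MeasurableSpace.isPiSystem_measurableSet _ m₂)
    (MeasurableSpace.sup_eq_generateFrom_image2_inter m₁ m')
    (@MeasurableSpace.generateFrom_measurableSet _ m₂).symm ?_
  rw [condIndepSets_iff _ hm' _ {t | MeasurableSet[m₂] t} hmeas hm₂]
  rintro _ t ⟨s, hs, u, hu, rfl⟩ ht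
  -- the `m'`-measurable factor `u` comes out of every conditional expectation given `m'`
  have hst := (condIndep_iff _ _ _ hm' hm₁ hm₂ μ).mp h s t hs ht
  have hus := condExp_indicator_inter_eq_indicator (μ := μ) (hm₁ s hs) hu
  have hust := condExp_indicator_inter_eq_indicator (μ := μ) ((hm₁ s hs).inter (hm₂ t ht)) hu
  dsimp only
  rw [inter_comm s u, inter_assoc]
  filter_upwards [hst, hus, hust] with ω hst hus hust
  rw [hust, Pi.mul_apply, hus]
  by_cases hω : ω ∈ u <;> simp [hω, hst]

lemma CondIndep.sup_sup (h : CondIndep m' m₁ m₂ hm' μ) (hm₁ : m₁ ≤ mΩ) (hm₂ : m₂ ≤ mΩ) :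
    CondIndep m' (m₁ ⊔ m') (m₂ ⊔ m') hm' μ :=
  ((h.sup_left hm₁ hm₂).symm.sup_left hm₂ (sup_le hm₁ hm')).symm

lemma condIndep_iff_condIndep_sup_sup (hm₁ : m₁ ≤ mΩ) (hm₂ : m₂ ≤ mΩ) :
    CondIndep m' m₁ m₂ hm' μ ↔ CondIndep m' (m₁ ⊔ m') (m₂ ⊔ m') hm' μ :=
  ⟨fun h => h.sup_sup hm₁ hm₂, fun h => condIndep_of_condIndep_of_le_right
    (condIndep_of_condIndep_of_le_left h le_sup_left) le_sup_left⟩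

theorem condIndep_iff_indep_of_indep_sup [IsProbabilityMeasure μ] (hm₁ : m₁ ≤ mΩ)
    (hm₂ : m₂ ≤ mΩ) (hind : Indep (m₁ ⊔ m₂) m' μ) :
    CondIndep m' m₁ m₂ hm' μ ↔ Indep m₁ m₂ μ := by
  rw [condIndep_iff _ _ _ hm' hm₁ hm₂, Indep_iff]
  refine forall₄_congr fun s t hs ht => ?_
  have hm₃ := sup_le hm₁ hm₂
  have hs₃ := le_sup_left (b := m₂) s hs
  have ht₃ := le_sup_right (a := m₁) t ht
  rw [(condExp_indicator_ae_eq_measureReal_of_indep hm' hm₃ hind (hs₃.inter ht₃)).congr_left,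
    ((condExp_indicator_ae_eq_measureReal_of_indep hm' hm₃ hind hs₃).mul
      (condExp_indicator_ae_eq_measureReal_of_indep hm' hm₃ hind ht₃)).congr_right]
  simp only [Filter.EventuallyEq, Pi.mul_apply, Filter.eventually_const, measureReal_def,
    ← ENNReal.toReal_mul]
  exact ENNReal.toReal_eq_toReal_iff' (measure_ne_top μ _)
    (ENNReal.mul_ne_top (measure_ne_top μ _) (measure_ne_top μ _))

end ProbabilityTheory

lemma MeasurableEmbedding.comap_comp {α β γ : Type*} [mα : MeasurableSpace α]
    [mβ : MeasurableSpace β] {φ : α → β} (hφ : MeasurableEmbedding φ) (U : γ → α) :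
    mβ.comap (φ ∘ U) = mα.comap U := by
  rw [← MeasurableSpace.comap_comp, hφ.comap_eq]

lemma measurableEmbedding_prodMk_snd_of_injective {α β γ : Type*} [MeasurableSpace α]
    [MeasurableSpace β] [MeasurableSpace γ] [StandardBorelSpace α] [StandardBorelSpace β]
    [StandardBorelSpace γ] {h : α → γ → β} (hh : Measurable fun q : α × γ => h q.1 q.2)
    (hinj : ∀ z, Function.Injective (h · z)) :
    MeasurableEmbedding fun q : α × γ => (h q.1 q.2, q.2) := by
  refine (hh.prodMk measurable_snd).measurableEmbedding ?_
  rintro ⟨e, z⟩ ⟨e', z'⟩ heq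
  obtain ⟨he, rfl : z = z'⟩ := Prod.mk.inj heq
  exact congrArg (·, z) (hinj z he)

lemma comap_sup_comap_eq_of_injective {Ω α β γ : Type*} [mα : MeasurableSpace α]
    [mβ : MeasurableSpace β] [mγ : MeasurableSpace γ] [StandardBorelSpace α]
    [StandardBorelSpace β] [StandardBorelSpace γ] {h : α → γ → β}
    (hh : Measurable fun q : α × γ => h q.1 q.2) (hinj : ∀ z, Function.Injective (h · z))
    (U : Ω → α) (Z : Ω → γ) :
    mβ.comap (fun ω => h (U ω) (Z ω)) ⊔ mγ.comap Z = mα.comap U ⊔ mγ.comap Z := by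
  rw [← MeasurableSpace.comap_prodMk, ← MeasurableSpace.comap_prodMk]
  exact (measurableEmbedding_prodMk_snd_of_injective hh hinj).comap_comp fun ω => (U ω, Z ω)

theorem lcit_latent_characterization_general
    {Ω : Type*} [MeasurableSpace Ω] [StandardBorelSpace Ω] {d : ℕ}
    (P : Measure Ω) [IsProbabilityMeasure P]
    (εX εY : Ω → ℝ) (Z : Ω → (Fin d → ℝ))
    (hεX : Measurable εX) (hεY : Measurable εY) (hZ : Measurable Z)
    (f g : ℝ → (Fin d → ℝ) → ℝ)
    (hf_meas : Measurable fun q : ℝ × (Fin d → ℝ) => f q.1 q.2)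
    (hg_meas : Measurable fun q : ℝ × (Fin d → ℝ) => g q.1 q.2)
    (hf_bij : ∀ z, Function.Bijective fun e => f e z)
    (hg_bij : ∀ z, Function.Bijective fun e => g e z)
    (hindep : IndepFun (fun ω => (εX ω, εY ω)) Z P)
    (X Y : Ω → ℝ) (hX : ∀ ω, X ω = f (εX ω) (Z ω)) (hY : ∀ ω, Y ω = g (εY ω) (Z ω)) :
    CondIndepFun (MeasurableSpace.comap Z inferInstance) hZ.comap_le X Y P ↔
      IndepFun εX εY P := by
  obtain rfl : X = fun ω => f (εX ω) (Z ω) := funext hX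
  obtain rfl : Y = fun ω => g (εY ω) (Z ω) := funext hY
  have hXm : Measurable fun ω => f (εX ω) (Z ω) := hf_meas.comp (hεX.prodMk hZ)
  have hYm : Measurable fun ω => g (εY ω) (Z ω) := hg_meas.comp (hεY.prodMk hZ)
  have hindep_sup : Indep (MeasurableSpace.comap εX inferInstance ⊔
      MeasurableSpace.comap εY inferInstance) (MeasurableSpace.comap Z inferInstance) P := by
    rw [← MeasurableSpace.comap_prodMk]
    exact (IndepFun_iff_Indep _ _ _).mp hindep
  rw [condIndepFun_iff_condIndep, IndepFun_iff_Indep,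
    condIndep_iff_condIndep_sup_sup hXm.comap_le hYm.comap_le,
    comap_sup_comap_eq_of_injective hf_meas (fun z => (hf_bij z).1),
    comap_sup_comap_eq_of_injective hg_meas (fun z => (hg_bij z).1),
    ← condIndep_iff_condIndep_sup_sup hεX.comap_le hεY.comap_le]
  exact condIndep_iff_indep_of_indep_sup hεX.comap_le hεY.comap_le hindep_sup

/-- With `X = f(ε_X, Z)`, `Y = g(ε_Y, Z)`, `(ε_X, ε_Y) ⟂ Z`, and `f, g`
invertible in their first argument with differentiable inverses (and a smooth strictly
positive joint density), `X ⟂ Y | Z` iff `ε_X ⟂ ε_Y`. -/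
theorem lcit_latent_characterization
    {Ω : Type*} [MeasurableSpace Ω] [StandardBorelSpace Ω] {d : ℕ}
    (P : Measure Ω) [IsProbabilityMeasure P]
    (εX εY : Ω → ℝ) (Z : Ω → (Fin d → ℝ))
    (hεX : Measurable εX) (hεY : Measurable εY) (hZ : Measurable Z)
    (f g : ℝ → (Fin d → ℝ) → ℝ)
    (hf_meas : Measurable fun q : ℝ × (Fin d → ℝ) => f q.1 q.2)
    (hg_meas : Measurable fun q : ℝ × (Fin d → ℝ) => g q.1 q.2)
    (hf_bij : ∀ z, Function.Bijective fun e => f e z)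
    (hg_bij : ∀ z, Function.Bijective fun e => g e z)
    (hf_diff : ∀ z, Differentiable ℝ fun e => f e z)
    (hg_diff : ∀ z, Differentiable ℝ fun e => g e z)
    (hf_inv_diff : ∀ z, Differentiable ℝ (Function.invFun fun e => f e z))
    (hg_inv_diff : ∀ z, Differentiable ℝ (Function.invFun fun e => g e z))
    (hindep : IndepFun (fun ω => (εX ω, εY ω)) Z P)
    (X Y : Ω → ℝ) (hX : ∀ ω, X ω = f (εX ω) (Z ω)) (hY : ∀ ω, Y ω = g (εY ω) (Z ω))
    (p : ℝ × ℝ × (Fin d → ℝ) → ℝ) (hp_pos : ∀ v, 0 < p v) (hp_smooth : Continuous p)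
    (hp : P.map (fun ω => (X ω, Y ω, Z ω)) =
      volume.withDensity fun v => ENNReal.ofReal (p v)) :
    CondIndepFun (MeasurableSpace.comap Z inferInstance) hZ.comap_le X Y P ↔
      IndepFun εX εY P :=
  lcit_latent_characterization_general P εX εY Z hεX hεY hZ f g hf_meas hg_meas hf_bij hg_bij hindep
    X Y hX hY
end

section
/- If (ε_X, ε_Y) is independent of Z, and X = f(ε_X, Z), Y = g(ε_Y, Z) with f, g invertible in their first argument, then the conditional mutual information I(X; Y | Z) equals the mutual information I(ε_X; ε_Y). -/
open MeasureTheory ProbabilityTheory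

/-- Kullback–Leibler divergence `∫ log (dμ/dν) dμ` (for `μ ≪ ν`). -/
noncomputable def klDivergence {α : Type*} [MeasurableSpace α] (μ ν : Measure α) : ℝ :=
  ∫ x, Real.log (μ.rnDeriv ν x).toReal ∂μ

/-- Mutual information `I(X; Y) = KL(P_{XY} ‖ P_X ⊗ P_Y)`. -/
noncomputable def mutualInfo {Ω α β : Type*} [MeasurableSpace Ω]
    [MeasurableSpace α] [MeasurableSpace β]
    (X : Ω → α) (Y : Ω → β) (P : Measure Ω) : ℝ :=
  klDivergence (P.map fun ω => (X ω, Y ω)) ((P.map X).prod (P.map Y))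

/-- Conditional mutual information
`I(X; Y | Z) = KL(P_{Z,(X,Y)} ‖ P_Z ⊗ (P_{X|Z} × P_{Y|Z}))`. -/
noncomputable def condMutualInfo {Ω β : Type*} [MeasurableSpace Ω] [MeasurableSpace β]
    (X Y : Ω → ℝ) (Z : Ω → β) (P : Measure Ω) [IsFiniteMeasure P] : ℝ :=
  klDivergence (P.map fun ω => (Z ω, (X ω, Y ω)))
    ((P.map Z).compProd ((condDistrib X Z P).prod (condDistrib Y Z P)))

/-!
Put `T (z, e₁, e₂) = (z, f e₁ z, g e₂ z)`. Since `(εX, εY)` is independent of `Z`, the law of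
`(Z, (X, Y))` is the image under `T` of `P_Z ⊗ P_(εX, εY)`, and `z ↦ (f · z)_* P_εX` is a version
of the conditional law of `X` given `Z` (likewise for `Y`); hence the reference measure defining
`I(X; Y | Z)` is the image under `T` of `P_Z ⊗ (P_εX ⊗ P_εY)`. As `T` is injective it does not
change the divergence, and the common factor `P_Z` drops out.

Both steps require `P_(εX, εY) ≪ P_εX ⊗ P_εY`, since `klDivergence` only sees the absolutely
continuous part of its first argument. The positive density makes the law of `(Z, (X, Y))`
equivalent to Lebesgue measure; `T` and its inverse preserve Lebesgue null sets fibre by fibre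
(they are differentiable in the noise), so `P_(εX, εY)` and then its marginals are equivalent to
Lebesgue measure too.
-/

open Function

namespace MeasureTheory

variable {α β γ : Type*} [MeasurableSpace α] [MeasurableSpace β] [MeasurableSpace γ]

lemma klDivergence_map_of_measurableEmbedding {T : α → β} (hT : MeasurableEmbedding T)
    {μ ν : Measure α} [SigmaFinite μ] [SigmaFinite ν] (hμν : μ ≪ ν) :
    klDivergence (μ.map T) (ν.map T) = klDivergence μ ν := by
  unfold klDivergence
  rw [hT.integral_map]
  exact integral_congr_ae <|
    ((hT.rnDeriv_map μ ν).filter_mono hμν.ae_le).fun_comp fun t => Real.log t.toReal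

lemma rnDeriv_prod_right (ρ : Measure α) [SigmaFinite ρ] {μ ν : Measure β}
    [SigmaFinite μ] [SigmaFinite ν] (hμν : μ ≪ ν) :
    (ρ.prod μ).rnDeriv (ρ.prod ν) =ᵐ[ρ.prod ν] fun z => μ.rnDeriv ν z.2 := by
  conv_lhs => rw [← Measure.withDensity_rnDeriv_eq μ ν hμν,
    prod_withDensity_right (Measure.measurable_rnDeriv μ ν)]
  exact Measure.rnDeriv_withDensity _ ((Measure.measurable_rnDeriv μ ν).comp measurable_snd)

lemma klDivergence_prod_right (ρ : Measure α) [IsProbabilityMeasure ρ] {μ ν : Measure β}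
    [SigmaFinite μ] [SigmaFinite ν] (hμν : μ ≪ ν) :
    klDivergence (ρ.prod μ) (ρ.prod ν) = klDivergence μ ν := by
  have hac : ρ.prod μ ≪ ρ.prod ν := Measure.AbsolutelyContinuous.rfl.prod hμν
  unfold klDivergence
  calc ∫ z, Real.log ((ρ.prod μ).rnDeriv (ρ.prod ν) z).toReal ∂ρ.prod μ
      = ∫ z, Real.log (μ.rnDeriv ν z.2).toReal ∂ρ.prod μ := integral_congr_ae <|
        ((rnDeriv_prod_right ρ hμν).filter_mono hac.ae_le).fun_comp fun t => Real.log t.toReal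
    _ = ∫ y, Real.log (μ.rnDeriv ν y).toReal ∂μ := by
        rw [integral_fun_snd fun y => Real.log (μ.rnDeriv ν y).toReal, probReal_univ, one_smul]

namespace Measure

def MutuallyAbsolutelyContinuous (μ ν : Measure α) : Prop := μ ≪ ν ∧ ν ≪ μ

lemma MutuallyAbsolutelyContinuous.map {μ ν : Measure α} (h : μ.MutuallyAbsolutelyContinuous ν)
    {f : α → β} (hf : Measurable f) : (μ.map f).MutuallyAbsolutelyContinuous (ν.map f) :=
  ⟨h.1.map hf, h.2.map hf⟩

lemma mutuallyAbsolutelyContinuous_withDensity_ofReal {μ : Measure α} {p : α → ℝ}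
    (hp : Measurable p) (hpos : ∀ᵐ x ∂μ, 0 < p x) :
    (μ.withDensity fun x => ENNReal.ofReal (p x)).MutuallyAbsolutelyContinuous μ :=
  ⟨withDensity_absolutelyContinuous _ _, withDensity_absolutelyContinuous'
    hp.ennreal_ofReal.aemeasurable (hpos.mono fun _ hx => (ENNReal.ofReal_pos.2 hx).ne')⟩

variable {ρ : Measure (α × β)} {μ : Measure α} {ν : Measure β}

lemma snd_absolutelyContinuous_of_absolutelyContinuous_prod [SFinite ν] (h : ρ ≪ μ.prod ν) :
    ρ.snd ≪ ν := by
  refine AbsolutelyContinuous.mk fun s hs hνs => ?_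
  rw [snd_apply hs, ← Set.univ_prod]
  exact h (by rw [prod_prod, hνs, mul_zero])

lemma absolutelyContinuous_fst_of_prod_absolutelyContinuous [SFinite ν] (h : μ.prod ν ≪ ρ)
    (hν : ν ≠ 0) : μ ≪ ρ.fst := by
  refine AbsolutelyContinuous.mk fun s hs hρs => ?_
  rw [fst_apply hs, ← Set.prod_univ] at hρs
  have := h hρs
  rw [prod_prod, mul_eq_zero] at this
  exact this.resolve_right (by simpa using hν)

lemma absolutelyContinuous_snd_of_prod_absolutelyContinuous [SFinite ν] (h : μ.prod ν ≪ ρ)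
    (hμ : μ ≠ 0) : ν ≪ ρ.snd := by
  refine AbsolutelyContinuous.mk fun s hs hρs => ?_
  rw [snd_apply hs, ← Set.univ_prod] at hρs
  have := h hρs
  rw [prod_prod, mul_eq_zero] at this
  exact this.resolve_left (by simpa using hμ)

lemma MutuallyAbsolutelyContinuous.absolutelyContinuous_fst_prod_snd {ν : Measure (β × γ)}
    [IsFiniteMeasure ν] {κ₁ : Measure β} {κ₂ : Measure γ} [SFinite κ₂]
    (h : ν.MutuallyAbsolutelyContinuous (κ₁.prod κ₂)) (hκ₁ : κ₁ ≠ 0) (hκ₂ : κ₂ ≠ 0) :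
    ν ≪ ν.fst.prod ν.snd :=
  h.1.trans <| (absolutelyContinuous_fst_of_prod_absolutelyContinuous h.2 hκ₂).prod
    (absolutelyContinuous_snd_of_prod_absolutelyContinuous h.2 hκ₁)

end Measure

lemma _root_.MeasurableEmbedding.absolutelyContinuous_of_map_absolutelyContinuous {T : α → β}
    (hT : MeasurableEmbedding T) {ρ μ : Measure α} {ξ : Measure β}
    (hnull : ∀ S, MeasurableSet S → μ S = 0 → ξ (T '' S) = 0) (h : ρ.map T ≪ ξ) : ρ ≪ μ :=
  Measure.AbsolutelyContinuous.mk fun S hS hμS => by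
    rw [← hT.injective.preimage_image S, ← hT.map_apply]
    exact h (hnull S hS hμS)

lemma _root_.MeasurableEmbedding.absolutelyContinuous_of_absolutelyContinuous_map {T : α → β}
    (hT : MeasurableEmbedding T) {ρ μ : Measure α} {ξ : Measure β}
    (hnull : ∀ S, MeasurableSet S → ξ (T '' S) = 0 → μ S = 0) (h : ξ ≪ ρ.map T) : μ ≪ ρ :=
  Measure.AbsolutelyContinuous.mk fun S hS hρS => by
    refine hnull S hS (h ?_)
    rwa [hT.map_apply, hT.injective.preimage_image]

lemma addHaar_image_eq_zero_iff_of_leftInverse {E : Type*} [NormedAddCommGroup E]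
    [NormedSpace ℝ E] [FiniteDimensional ℝ E] [MeasurableSpace E] [BorelSpace E]
    (μ : Measure E) [μ.IsAddHaarMeasure] {φ ψ : E → E} (hφ : Differentiable ℝ φ)
    (hψ : Differentiable ℝ ψ) (hψφ : LeftInverse ψ φ) (A : Set E) :
    μ (φ '' A) = 0 ↔ μ A = 0 := by
  refine ⟨fun h => ?_,
    addHaar_image_eq_zero_of_differentiableOn_of_addHaar_eq_zero μ hφ.differentiableOn⟩
  rw [← hψφ.image_image A]
  exact addHaar_image_eq_zero_of_differentiableOn_of_addHaar_eq_zero μ hψ.differentiableOn h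

end MeasureTheory

section FiberwiseMap

variable {α β γ : Type*}

def fiberwiseMap (φ : α → β → γ) (q : α × β) : α × γ := (q.1, φ q.1 q.2)

lemma preimage_prodMk_fiberwiseMap_image (φ : α → β → γ) (S : Set (α × β)) (a : α) :
    Prod.mk a ⁻¹' (fiberwiseMap φ '' S) = φ a '' (Prod.mk a ⁻¹' S) := by
  ext c
  simp [fiberwiseMap]

variable [MeasurableSpace α] [MeasurableSpace β] [MeasurableSpace γ]

lemma Measurable.uncurry_prodMap {β' γ' : Type*} [MeasurableSpace β'] [MeasurableSpace γ']
    {φ : α → β → γ} {ψ : α → β' → γ'} (hφ : Measurable (uncurry φ))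
    (hψ : Measurable (uncurry ψ)) : Measurable (uncurry fun a => Prod.map (φ a) (ψ a)) :=
  (hφ.comp (measurable_fst.prodMk measurable_snd.fst)).prodMk
    (hψ.comp (measurable_fst.prodMk measurable_snd.snd))

lemma measurable_fiberwiseMap {φ : α → β → γ} (hφ : Measurable (uncurry φ)) :
    Measurable (fiberwiseMap φ) :=
  measurable_fst.prodMk hφ

lemma measurableEmbedding_fiberwiseMap [StandardBorelSpace α] [StandardBorelSpace β]
    [StandardBorelSpace γ] {φ : α → β → γ} (hφ : Measurable (uncurry φ))
    (hinj : ∀ a, Injective (φ a)) : MeasurableEmbedding (fiberwiseMap φ) := by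
  refine (measurable_fiberwiseMap hφ).measurableEmbedding ?_
  rintro ⟨a, b⟩ ⟨a', b'⟩ h
  simp only [fiberwiseMap, Prod.mk.injEq] at h
  obtain ⟨rfl, h⟩ := h
  rw [hinj a h]

lemma measure_prod_fiberwiseMap_image_eq_zero_iff (μ : Measure α) {ν : Measure β} [SFinite ν]
    {φ : α → β → β} (hT : MeasurableEmbedding (fiberwiseMap φ))
    (hφ : ∀ a A, ν (φ a '' A) = 0 ↔ ν A = 0) {S : Set (α × β)} (hS : MeasurableSet S) :
    μ.prod ν (fiberwiseMap φ '' S) = 0 ↔ μ.prod ν S = 0 := by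
  rw [Measure.measure_prod_null (hT.measurableSet_image' hS), Measure.measure_prod_null hS]
  simp only [preimage_prodMk_fiberwiseMap_image, Filter.EventuallyEq, Pi.zero_apply, hφ]

lemma MeasureTheory.Measure.MutuallyAbsolutelyContinuous.of_map_fiberwiseMap {μ ξ : Measure α}
    [IsProbabilityMeasure μ] [SigmaFinite ξ] (hξ : ξ ≠ 0) {ν κ : Measure β} [SigmaFinite ν]
    [SigmaFinite κ] {φ : α → β → β} (hT : MeasurableEmbedding (fiberwiseMap φ))
    (hφ : ∀ a A, κ (φ a '' A) = 0 ↔ κ A = 0)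
    (h : ((μ.prod ν).map (fiberwiseMap φ)).MutuallyAbsolutelyContinuous (ξ.prod κ)) :
    ν.MutuallyAbsolutelyContinuous κ := by
  have hnull := fun S (hS : MeasurableSet S) =>
    measure_prod_fiberwiseMap_image_eq_zero_iff ξ hT hφ hS
  constructor
  · simpa using Measure.snd_absolutelyContinuous_of_absolutelyContinuous_prod <|
      hT.absolutelyContinuous_of_map_absolutelyContinuous (fun S hS => (hnull S hS).2) h.1
  · simpa using Measure.absolutelyContinuous_snd_of_prod_absolutelyContinuous
      (hT.absolutelyContinuous_of_absolutelyContinuous_map (fun S hS => (hnull S hS).1) h.2) hξ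

end FiberwiseMap

namespace ProbabilityTheory

variable {α β γ : Type*} [MeasurableSpace α] [MeasurableSpace β] [MeasurableSpace γ]
  {φ : α → β → γ}

noncomputable def pushforwardKernel (ν : Measure β) [SFinite ν] (φ : α → β → γ) : Kernel α γ :=
  (Kernel.id ×ₖ Kernel.const α ν).map (uncurry φ)

instance (ν : Measure β) [SFinite ν] (φ : α → β → γ) :
    IsSFiniteKernel (pushforwardKernel ν φ) := by
  unfold pushforwardKernel; infer_instance

instance (ν : Measure β) [IsFiniteMeasure ν] (φ : α → β → γ) :
    IsFiniteKernel (pushforwardKernel ν φ) := by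
  unfold pushforwardKernel; infer_instance

lemma pushforwardKernel_apply (hφ : Measurable (uncurry φ)) (ν : Measure β) [SFinite ν]
    (a : α) :
    pushforwardKernel ν φ a = ν.map (φ a) := by
  rw [pushforwardKernel, Kernel.map_apply _ hφ, Kernel.prod_apply, Kernel.id_apply,
    Kernel.const_apply, Measure.dirac_prod, Measure.map_map hφ measurable_prodMk_left]
  rfl

lemma compProd_pushforwardKernel (hφ : Measurable (uncurry φ)) (μ : Measure α) [SFinite μ]
    (ν : Measure β) [SFinite ν] :
    μ ⊗ₘ pushforwardKernel ν φ = (μ.prod ν).map (fiberwiseMap φ) := by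
  ext s hs
  rw [Measure.compProd_apply hs, Measure.map_apply (measurable_fiberwiseMap hφ) hs,
    Measure.prod_apply (measurable_fiberwiseMap hφ hs)]
  refine lintegral_congr fun a => ?_
  rw [pushforwardKernel_apply hφ, Measure.map_apply hφ.of_uncurry_left
    (measurable_prodMk_left hs)]
  rfl

lemma pushforwardKernel_prod {β' γ' : Type*} [MeasurableSpace β'] [MeasurableSpace γ']
    {ψ : α → β' → γ'} (hφ : Measurable (uncurry φ)) (hψ : Measurable (uncurry ψ))
    (μ : Measure β) (ν : Measure β') [SigmaFinite μ] [SigmaFinite ν] :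
    pushforwardKernel μ φ ×ₖ pushforwardKernel ν ψ
      = pushforwardKernel (μ.prod ν) fun a => Prod.map (φ a) (ψ a) := by
  ext1 a
  rw [Kernel.prod_apply, pushforwardKernel_apply hφ, pushforwardKernel_apply hψ,
    pushforwardKernel_apply (hφ.uncurry_prodMap hψ),
    Measure.map_prod_map _ _ hφ.of_uncurry_left hψ.of_uncurry_left]

variable {Ω : Type*} [MeasurableSpace Ω] {P : Measure Ω} [IsFiniteMeasure P] {Z : Ω → α}
  {ε : Ω → β} {X : Ω → γ}

lemma map_prodMk_eq_map_fiberwiseMap (hε : Measurable ε) (hZ : Measurable Z)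
    (hind : IndepFun ε Z P) (hφ : Measurable (uncurry φ)) (hX : ∀ ω, X ω = φ (Z ω) (ε ω)) :
    P.map (fun ω => (Z ω, X ω)) = ((P.map Z).prod (P.map ε)).map (fiberwiseMap φ) := by
  rw [← (indepFun_iff_map_prod_eq_prod_map_map hZ.aemeasurable hε.aemeasurable).mp hind.symm,
    Measure.map_map (measurable_fiberwiseMap hφ) (hZ.prodMk hε)]
  congr with ω <;> simp [fiberwiseMap, hX]

lemma condDistrib_ae_eq_pushforwardKernel [StandardBorelSpace γ] [Nonempty γ]
    (hε : Measurable ε) (hZ : Measurable Z) (hind : IndepFun ε Z P)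
    (hφ : Measurable (uncurry φ)) (hX : ∀ ω, X ω = φ (Z ω) (ε ω)) :
    condDistrib X Z P =ᵐ[P.map Z] pushforwardKernel (P.map ε) φ := by
  have hXm : Measurable X := by
    rw [funext hX]
    exact hφ.comp (hZ.prodMk hε)
  refine condDistrib_ae_eq_of_measure_eq_compProd_of_measurable hZ hXm ?_
  rw [map_prodMk_eq_map_fiberwiseMap hε hZ hind hφ hX, compProd_pushforwardKernel hφ]

theorem condMutualInfo_eq_mutualInfo_of_indepFun [IsProbabilityMeasure P] [StandardBorelSpace α]
    [StandardBorelSpace β] [StandardBorelSpace γ] {ε₁ : Ω → β} {ε₂ : Ω → γ} {X Y : Ω → ℝ}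
    (hε₁ : Measurable ε₁) (hε₂ : Measurable ε₂) (hZ : Measurable Z)
    (hind : IndepFun (fun ω => (ε₁ ω, ε₂ ω)) Z P) {φ : α → β → ℝ} {ψ : α → γ → ℝ}
    (hφ : Measurable (uncurry φ)) (hψ : Measurable (uncurry ψ)) (hφ_inj : ∀ a, Injective (φ a))
    (hψ_inj : ∀ a, Injective (ψ a)) (hX : ∀ ω, X ω = φ (Z ω) (ε₁ ω))
    (hY : ∀ ω, Y ω = ψ (Z ω) (ε₂ ω))
    (hε : P.map (fun ω => (ε₁ ω, ε₂ ω)) ≪ (P.map ε₁).prod (P.map ε₂)) :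
    condMutualInfo X Y Z P = mutualInfo ε₁ ε₂ P := by
  have := Measure.isProbabilityMeasure_map (μ := P) hZ.aemeasurable
  have hΦ := hφ.uncurry_prodMap hψ
  have hT := measurableEmbedding_fiberwiseMap hΦ fun a => (hφ_inj a).prodMap (hψ_inj a)
  have hcond : (condDistrib X Z P).prod (condDistrib Y Z P)
      =ᵐ[P.map Z] pushforwardKernel ((P.map ε₁).prod (P.map ε₂)) fun a => Prod.map (φ a) (ψ a) := by
    filter_upwards [condDistrib_ae_eq_pushforwardKernel hε₁ hZ
        (hind.comp measurable_fst measurable_id) hφ hX,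
      condDistrib_ae_eq_pushforwardKernel hε₂ hZ
        (hind.comp measurable_snd measurable_id) hψ hY] with z hXz hYz
    rw [Kernel.prod_apply, hXz, hYz, ← Kernel.prod_apply, pushforwardKernel_prod hφ hψ _ _]
  rw [condMutualInfo, mutualInfo, Measure.compProd_congr hcond, compProd_pushforwardKernel hΦ,
    map_prodMk_eq_map_fiberwiseMap (hε₁.prodMk hε₂) hZ hind hΦ fun ω => by rw [hX, hY]; rfl,
    klDivergence_map_of_measurableEmbedding hT (Measure.AbsolutelyContinuous.rfl.prod hε),
    klDivergence_prod_right _ hε]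

end ProbabilityTheory

lemma map_prodMk_mutuallyAbsolutelyContinuous_volume {Ω A B C : Type*} [MeasurableSpace Ω]
    [MeasureSpace A] [MeasureSpace B] [MeasureSpace C] [SigmaFinite (volume : Measure A)]
    [SigmaFinite (volume : Measure B)] [SigmaFinite (volume : Measure C)] {P : Measure Ω}
    {X : Ω → A} {Y : Ω → B} {Z : Ω → C}
    (hX : Measurable X) (hY : Measurable Y) (hZ : Measurable Z) {p : A × B × C → ℝ}
    (hp_meas : Measurable p) (hp_pos : ∀ᵐ v, 0 < p v)
    (hp : P.map (fun ω => (X ω, Y ω, Z ω)) = volume.withDensity fun v => ENNReal.ofReal (p v)) :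
    (P.map fun ω => (Z ω, (X ω, Y ω))).MutuallyAbsolutelyContinuous volume := by
  let rot : A × B × C ≃ᵐ C × (A × B) :=
    MeasurableEquiv.prodAssoc.symm.trans MeasurableEquiv.prodComm
  have hrot : MeasurePreserving rot volume volume :=
    Measure.measurePreserving_swap.comp (volume_preserving_prodAssoc.symm _)
  have hlaw : P.map (fun ω => (Z ω, (X ω, Y ω))) = (P.map fun ω => (X ω, Y ω, Z ω)).map rot := by
    rw [Measure.map_map rot.measurable (hX.prodMk (hY.prodMk hZ))]
    rfl
  rw [hlaw, hp, ← hrot.map_eq]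
  exact (Measure.mutuallyAbsolutelyContinuous_withDensity_ofReal hp_meas hp_pos).map
    rot.measurable

theorem cond_mutual_info_eq_latent_mutual_info_general
    {Ω : Type*} [MeasurableSpace Ω] {d : ℕ}
    (P : Measure Ω) [IsProbabilityMeasure P]
    (εX εY : Ω → ℝ) (Z : Ω → (Fin d → ℝ))
    (hεX : Measurable εX) (hεY : Measurable εY) (hZ : Measurable Z)
    (f g : ℝ → (Fin d → ℝ) → ℝ)
    (hf_meas : Measurable fun q : ℝ × (Fin d → ℝ) => f q.1 q.2)
    (hg_meas : Measurable fun q : ℝ × (Fin d → ℝ) => g q.1 q.2)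
    (hf_bij : ∀ z, Function.Bijective fun e => f e z)
    (hg_bij : ∀ z, Function.Bijective fun e => g e z)
    (hf_diff : ∀ z, Differentiable ℝ fun e => f e z)
    (hg_diff : ∀ z, Differentiable ℝ fun e => g e z)
    (hf_inv_diff : ∀ z, Differentiable ℝ (Function.invFun fun e => f e z))
    (hg_inv_diff : ∀ z, Differentiable ℝ (Function.invFun fun e => g e z))
    (hindep : IndepFun (fun ω => (εX ω, εY ω)) Z P)
    (X Y : Ω → ℝ) (hX : ∀ ω, X ω = f (εX ω) (Z ω)) (hY : ∀ ω, Y ω = g (εY ω) (Z ω))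
    (p : ℝ × ℝ × (Fin d → ℝ) → ℝ) (hp_pos : ∀ v, 0 < p v) (hp_smooth : Continuous p)
    (hp : P.map (fun ω => (X ω, Y ω, Z ω)) =
      volume.withDensity fun v => ENNReal.ofReal (p v)) :
    condMutualInfo X Y Z P = mutualInfo εX εY P := by
  have hfm : Measurable (uncurry fun z e => f e z) := hf_meas.comp measurable_swap
  have hgm : Measurable (uncurry fun z e => g e z) := hg_meas.comp measurable_swap
  have hf_inj z := (hf_bij z).injective
  have hg_inj z := (hg_bij z).injective
  refine condMutualInfo_eq_mutualInfo_of_indepFun hεX hεY hZ hindep hfm hgm hf_inj hg_inj hX hY ?_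
  have := Measure.isProbabilityMeasure_map (μ := P) hZ.aemeasurable
  have hΦ := hfm.uncurry_prodMap hgm
  have hXm : Measurable X := by rw [funext hX]; exact hfm.comp (hZ.prodMk hεX)
  have hYm : Measurable Y := by rw [funext hY]; exact hgm.comp (hZ.prodMk hεY)
  have hvol := map_prodMk_mutuallyAbsolutelyContinuous_volume hXm hYm hZ hp_smooth.measurable
    (ae_of_all _ hp_pos) hp
  rw [map_prodMk_eq_map_fiberwiseMap (hεX.prodMk hεY) hZ hindep hΦ fun ω => by rw [hX, hY]; rfl,
    Measure.volume_eq_prod] at hvol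
  have hnull z A : volume (Prod.map (fun e => f e z) (fun e => g e z) '' A) = 0 ↔ volume A = 0 :=
    addHaar_image_eq_zero_iff_of_leftInverse (φ := Prod.map (fun e => f e z) (fun e => g e z))
      volume
      (fun q => .prodMap q (hf_diff z q.1) (hg_diff z q.2))
      (fun q => .prodMap q (hf_inv_diff z q.1) (hg_inv_diff z q.2))
      ((leftInverse_invFun (hf_inj z)).prodMap (leftInverse_invFun (hg_inj z))) A
  have hlatent := hvol.of_map_fiberwiseMap (NeZero.ne _)
    (measurableEmbedding_fiberwiseMap hΦ fun z => (hf_inj z).prodMap (hg_inj z)) hnull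
  simpa only [Measure.fst_map_prodMk hεY, Measure.snd_map_prodMk hεX] using
    hlatent.absolutelyContinuous_fst_prod_snd (NeZero.ne _) (NeZero.ne _)

/-- With `X = f(ε_X, Z)`, `Y = g(ε_Y, Z)`, `(ε_X, ε_Y) ⟂ Z` and `f, g`
invertible (diffeomorphisms) in their first argument, `I(X; Y | Z) = I(ε_X; ε_Y)`. -/
theorem cond_mutual_info_eq_latent_mutual_info
    {Ω : Type*} [MeasurableSpace Ω] [StandardBorelSpace Ω] [Nonempty Ω] {d : ℕ}
    (P : Measure Ω) [IsProbabilityMeasure P]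
    (εX εY : Ω → ℝ) (Z : Ω → (Fin d → ℝ))
    (hεX : Measurable εX) (hεY : Measurable εY) (hZ : Measurable Z)
    (f g : ℝ → (Fin d → ℝ) → ℝ)
    (hf_meas : Measurable fun q : ℝ × (Fin d → ℝ) => f q.1 q.2)
    (hg_meas : Measurable fun q : ℝ × (Fin d → ℝ) => g q.1 q.2)
    (hf_bij : ∀ z, Function.Bijective fun e => f e z)
    (hg_bij : ∀ z, Function.Bijective fun e => g e z)
    (hf_diff : ∀ z, Differentiable ℝ fun e => f e z)
    (hg_diff : ∀ z, Differentiable ℝ fun e => g e z)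
    (hf_inv_diff : ∀ z, Differentiable ℝ (Function.invFun fun e => f e z))
    (hg_inv_diff : ∀ z, Differentiable ℝ (Function.invFun fun e => g e z))
    (hindep : IndepFun (fun ω => (εX ω, εY ω)) Z P)
    (X Y : Ω → ℝ) (hX : ∀ ω, X ω = f (εX ω) (Z ω)) (hY : ∀ ω, Y ω = g (εY ω) (Z ω))
    (p : ℝ × ℝ × (Fin d → ℝ) → ℝ) (hp_pos : ∀ v, 0 < p v) (hp_smooth : Continuous p)
    (hp : P.map (fun ω => (X ω, Y ω, Z ω)) =
      volume.withDensity fun v => ENNReal.ofReal (p v)) :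
    condMutualInfo X Y Z P = mutualInfo εX εY P :=
  cond_mutual_info_eq_latent_mutual_info_general P εX εY Z hεX hεY hZ f g hf_meas hg_meas hf_bij
    hg_bij hf_diff hg_diff hf_inv_diff hg_inv_diff hindep X Y hX hY p hp_pos hp_smooth hp
end

section
/- Suppose Z = f(X) + E with E independent of X, f nonconstant measurable, and define the regression residual r_X = X − E[X | Z]. Then in general r_X is not independent of Z; concretely, there exist distributions of X, E and a function f (e.g., X, E standard normal and f(x) = x²) for which r_X and Z are dependent. -/
open MeasureTheory ProbabilityTheory

/-! Take `X, E` the coordinates of `ℝ²` under the product of two standard Gaussians. The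
reflection `X ↦ -X` preserves this law and `Z = X² + E`, so `E[X | Z] = 0` and the residual is `X`
itself. If `X` were independent of `Z`, so would be `X²`; as `X²` is also independent of `E`,
`Var X² = cov(X², Z) - cov(X², E) = 0`, which is impossible since `X²` is not almost surely
constant. -/

theorem MeasureTheory.MeasurePreserving.condExp_comap_ae_eq_zero {Ω β : Type*}
    [MeasurableSpace Ω] [mβ : MeasurableSpace β] {μ : Measure Ω} [IsFiniteMeasure μ]
    {T : Ω → Ω} {f : Ω → ℝ} {g : Ω → β} (hT : MeasurePreserving T μ μ) (hg : Measurable g)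
    (hgT : ∀ ω, g (T ω) = g ω) (hfT : ∀ ω, f (T ω) = -f ω) :
    μ[f | mβ.comap g] =ᵐ[μ] 0 := by
  by_cases hf : Integrable f μ
  swap
  · rw [condExp_of_not_integrable hf]
  refine (ae_eq_condExp_of_forall_setIntegral_eq hg.comap_le hf
    (fun _ _ _ => integrableOn_zero) (fun s hs _ => ?_) aestronglyMeasurable_const).symm
  obtain ⟨t, ht, rfl⟩ := hs
  have hT_inv : T ⁻¹' (g ⁻¹' t) = g ⁻¹' t := by
    ext ω; simp [hgT]
  have hf_map : AEStronglyMeasurable f (μ.map T) := by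
    rw [hT.map_eq]; exact hf.aestronglyMeasurable
  have h_neg : ∫ ω in g ⁻¹' t, f ω ∂μ = -∫ ω in g ⁻¹' t, f ω ∂μ := calc
    ∫ ω in g ⁻¹' t, f ω ∂μ = ∫ ω in g ⁻¹' t, f ω ∂μ.map T := by rw [hT.map_eq]
    _ = ∫ ω in T ⁻¹' (g ⁻¹' t), f (T ω) ∂μ := setIntegral_map (hg ht) hf_map hT.aemeasurable
    _ = -∫ ω in g ⁻¹' t, f ω ∂μ := by simp only [hT_inv, hfT, integral_neg]
  simp only [integral_zero]
  linarith

theorem ProbabilityTheory.IndepFun.ae_eq_integral_of_indepFun_add {Ω : Type*}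
    [MeasurableSpace Ω] {μ : Measure Ω} [IsFiniteMeasure μ] {Y E : Ω → ℝ}
    (hYE : IndepFun Y E μ) (hY_sum : IndepFun Y (Y + E) μ) (hY : MemLp Y 2 μ)
    (hE : MemLp E 2 μ) : ∀ᵐ ω ∂μ, Y ω = μ[Y] := by
  refine ae_eq_integral_of_variance_eq_zero hY ?_
  calc Var[Y; μ] = cov[Y, Y + E; μ] - cov[Y, E; μ] := by
        rw [covariance_add_right hY hY hE, covariance_self hY.aemeasurable]; ring
    _ = 0 := by
        rw [hY_sum.covariance_eq_zero hY (hY.add hE), hYE.covariance_eq_zero hY hE, sub_self]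

theorem MeasureTheory.not_ae_sq_eq {μ : Measure ℝ} [NullSingletonClass μ] [NeZero μ] (c : ℝ) :
    ¬ ∀ᵐ x ∂μ, x ^ 2 = c := by
  intro h
  have h_null : μ {x | x ^ 2 = c} = 0 := by
    refine measure_mono_null (t := {√c, -√c}) (fun x hx => ?_) ((Set.toFinite _).measure_zero μ)
    have hx_abs : |x| = √c := by rw [← hx.out, Real.sqrt_sq_eq_abs]
    simpa using (abs_eq (Real.sqrt_nonneg c)).mp hx_abs
  exact NeZero.ne μ
    (ae_eq_bot.mp (by simpa using h.and (measure_eq_zero_iff_ae_notMem.mp h_null)))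

theorem ProbabilityTheory.memLp_sq_gaussianReal (m : ℝ) (v : NNReal) :
    MemLp (fun x : ℝ => x ^ 2) 2 (gaussianReal m v) := by
  rw [memLp_two_iff_integrable_sq (by fun_prop)]
  simpa [← pow_mul, (by decide : Even 4).pow_abs] using
    (memLp_id_gaussianReal (μ := m) (v := v) 4).integrable_norm_pow (p := 4) (by norm_num)

theorem ProbabilityTheory.measurePreserving_neg_prod_gaussianReal (v : NNReal) (ν : Measure ℝ)
    [SFinite ν] : MeasurePreserving (fun p : ℝ × ℝ => (-p.1, p.2))
      ((gaussianReal 0 v).prod ν) ((gaussianReal 0 v).prod ν) := by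
  refine MeasurePreserving.prod (f := fun x => -x) (g := id) ⟨by fun_prop, ?_⟩ (.id ν)
  simp [gaussianReal_map_neg]

/-- Regression in the anticausal direction generally fails to remove
dependence: there exist a probability space, independent standard normal `X` and `E`, and
a nonconstant measurable `f` (e.g. `f x = x²`) such that, with `Z = f(X) + E`, the
residual `r_X = X − E[X | Z]` is not independent of `Z`. -/
theorem anticausal_residual_not_independent :
    ∃ (Ω : Type) (_ : MeasurableSpace Ω) (P : Measure Ω) (_ : IsProbabilityMeasure P)
      (X E : Ω → ℝ) (f : ℝ → ℝ),
      Measurable X ∧ Measurable E ∧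
      P.map X = gaussianReal 0 1 ∧ P.map E = gaussianReal 0 1 ∧
      IndepFun X E P ∧
      Measurable f ∧ (¬ ∃ c : ℝ, ∀ x, f x = c) ∧ (∀ x, f x = x ^ 2) ∧
      ¬ IndepFun
        (fun ω => X ω -
          (P[X | MeasurableSpace.comap (fun ω' => f (X ω') + E ω') inferInstance]) ω)
        (fun ω => f (X ω) + E ω) P := by
  set γ := gaussianReal 0 1
  refine ⟨ℝ × ℝ, inferInstance, γ.prod γ, inferInstance, Prod.fst, Prod.snd, fun x => x ^ 2,
    measurable_fst, measurable_snd, by simp, by simp, indepFun_prod measurable_id measurable_id,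
    by fun_prop, fun ⟨c, hc⟩ => by linarith [hc 0, hc 1], fun _ => rfl, fun h_indep => ?_⟩
  have h_residual : (fun p : ℝ × ℝ => p.1 - ((γ.prod γ)[Prod.fst | MeasurableSpace.comap
      (fun p : ℝ × ℝ => p.1 ^ 2 + p.2) inferInstance]) p) =ᵐ[γ.prod γ] Prod.fst := by
    filter_upwards [(measurePreserving_neg_prod_gaussianReal 1 γ).condExp_comap_ae_eq_zero
      (f := Prod.fst) (g := fun p : ℝ × ℝ => p.1 ^ 2 + p.2) (by fun_prop) (fun _ => by simp)
      (fun _ => rfl)] with p hp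
    exact sub_eq_self.mpr hp
  have h_sq_indep : IndepFun (fun p : ℝ × ℝ => p.1 ^ 2) (fun p => p.1 ^ 2 + p.2) (γ.prod γ) :=
    (h_indep.congr h_residual .rfl).comp (measurable_id.pow_const 2) measurable_id
  have h_sq_const := (indepFun_prod (measurable_id.pow_const 2) measurable_id
    (μ := γ) (ν := γ)).ae_eq_integral_of_indepFun_add h_sq_indep
      ((memLp_sq_gaussianReal 0 1).comp_fst γ) ((memLp_id_gaussianReal 2).comp_snd γ)
  have : NullSingletonClass γ := nullSingletonClass_gaussianReal one_ne_zero
  exact not_ae_sq_eq _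
    ((Measure.ae_ae_of_ae_prod h_sq_const).mono fun _ hx => Filter.eventually_const.mp hx)
end
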